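/- Suppose X_iᵀX_i = Σ for all i, so that 𝕏ᵀ𝕏 = I_N ⊗ Σ and 𝕏(γ)ᵀ𝕏(γ) = Ñ_Σ(γ) where 𝕏(γ) = 𝕏·𝔻(γ). Then the following matrix identity holds: ( 𝕏ᵀ𝕏(γ)·[𝕏(γ)ᵀ𝕏(γ)]^{-1}Rᵀ{R[𝕏(γ)ᵀ𝕏(γ)]^{-1}Rᵀ}^{-1}R·(𝕏(γ)ᵀ𝕏(γ))^{-1}𝔻(γ)ᵀ − I_{NK} ) · (𝕏ᵀ𝕏) · 𝔻(γ)·(𝕏(γ)ᵀ𝕏(γ))^{-1}Rᵀ = 0. -/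

import Mathlib

open Matrix MeasureTheory ProbabilityTheory
open scoped Kronecker Classical

noncomputable section

/-- The group-dummy matrix `D(γ)`: entry `(i, g)` is `1` if `γ i = g` and `0` otherwise. -/
def Dmat {N G : ℕ} (γ : Fin N → Fin G) : Matrix (Fin N) (Fin G) ℝ :=
  Matrix.of fun i g => if γ i = g then (1 : ℝ) else 0

/-- `𝔻(γ) = D(γ) ⊗ I_K`. -/
def Dbb {N G : ℕ} (K : ℕ) (γ : Fin N → Fin G) :
    Matrix (Fin N × Fin K) (Fin G × Fin K) ℝ :=
  Dmat γ ⊗ₖ (1 : Matrix (Fin K) (Fin K) ℝ)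

/-- The group sizes `n_g = #{i : γ i = g}`. -/
def ngrp {N G : ℕ} (γ : Fin N → Fin G) (g : Fin G) : ℕ :=
  Finset.card (Finset.filter (fun i => γ i = g) Finset.univ)

/-- `Ñ_Σ(γ) = diag(n_1, …, n_G) ⊗ Σ`. -/
def Ntil {N G K : ℕ} (γ : Fin N → Fin G) (S : Matrix (Fin K) (Fin K) ℝ) :
    Matrix (Fin G × Fin K) (Fin G × Fin K) ℝ :=
  (Matrix.diagonal fun g : Fin G => (ngrp γ g : ℝ)) ⊗ₖ S

/-- The unconstrained TSK group-mean estimator `α̃(γ, b) = (𝔻(γ)ᵀ𝔻(γ))⁻¹𝔻(γ)ᵀ b`. -/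
def alphaTil {N G K : ℕ} (γ : Fin N → Fin G) (b : Fin N × Fin K → ℝ) :
    Fin G × Fin K → ℝ :=
  (((Dbb K γ)ᵀ * Dbb K γ)⁻¹ * (Dbb K γ)ᵀ) *ᵥ b

/-- The constrained TSK estimator
`α̃_R(γ, b) = α̃(γ, b) − Ñ_Σ(γ)⁻¹Rᵀ[R Ñ_Σ(γ)⁻¹Rᵀ]⁻¹(R α̃(γ, b) − c)`. -/
def alphaTilR {N G K r : ℕ} (γ : Fin N → Fin G) (S : Matrix (Fin K) (Fin K) ℝ)
    (R : Matrix (Fin r) (Fin G × Fin K) ℝ) (c : Fin r → ℝ) (b : Fin N × Fin K → ℝ) :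
    Fin G × Fin K → ℝ :=
  alphaTil γ b -
    ((Ntil γ S)⁻¹ * Rᵀ * (R * (Ntil γ S)⁻¹ * Rᵀ)⁻¹) *ᵥ (R *ᵥ alphaTil γ b - c)

/-- `X` is an (`ι`-indexed) Gaussian random vector with mean `μ` and covariance matrix `C`:
it is measurable, and every linear functional of `X` has the corresponding one-dimensional
Gaussian law. -/
def IsGaussianVec {Ω ι : Type*} [MeasurableSpace Ω] [Fintype ι]
    (P : Measure Ω) (X : Ω → ι → ℝ) (μ : ι → ℝ) (C : Matrix ι ι ℝ) : Prop :=
  Measurable X ∧ ∀ l : ι → ℝ,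
    P.map (fun ω => l ⬝ᵥ X ω) = gaussianReal (l ⬝ᵥ μ) (Real.toNNReal (l ⬝ᵥ (C *ᵥ l)))

/-- The chi-squared distribution with `k` degrees of freedom, i.e. `Gamma(k/2, 1/2)`. -/
def chiSq (k : ℕ) : Measure ℝ := gammaMeasure ((k : ℝ) / 2) (1 / 2)

/-- The positive-semidefinite square root of a matrix (junk value `0` if the matrix is not
positive semidefinite). -/
def matSqrt {n : Type*} [Fintype n] [DecidableEq n] (M : Matrix n n ℝ) :
    Matrix n n ℝ :=
  if h : M.PosSemidef then
    (h.1.eigenvectorUnitary : Matrix n n ℝ) * diagonal ((↑) ∘ Real.sqrt ∘ h.1.eigenvalues) *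
      (star h.1.eigenvectorUnitary : Matrix n n ℝ)
  else 0

/-- The squared Euclidean norm `‖v‖²`. -/
def sqNorm {ι : Type*} [Fintype ι] (v : ι → ℝ) : ℝ := ∑ i, v i ^ 2

/-- The Euclidean direction `v / ‖v‖` (junk value `0` when `v = 0`). -/
def dir {ι : Type*} [Fintype ι] (v : ι → ℝ) : ι → ℝ :=
  (Real.sqrt (sqNorm v))⁻¹ • v

/-- The `NT × NK` block-diagonal design matrix `𝕏` with diagonal blocks `X_i`. -/
def bigX {N T K : ℕ} (X : Fin N → Matrix (Fin T) (Fin K) ℝ) :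
    Matrix (Fin N × Fin T) (Fin N × Fin K) ℝ :=
  Matrix.of fun it jk => if it.1 = jk.1 then X it.1 it.2 jk.2 else 0

/-- The PCR estimator `α̂(γ, s) = (𝕏(γ)ᵀ𝕏(γ))⁻¹𝔻(γ)ᵀ s`, where `𝕏(γ) = 𝕏 𝔻(γ)`. -/
def alphaHat {N G K T : ℕ} (X : Fin N → Matrix (Fin T) (Fin K) ℝ)
    (γ : Fin N → Fin G) (s : Fin N × Fin K → ℝ) : Fin G × Fin K → ℝ :=
  (((bigX X * Dbb K γ)ᵀ * (bigX X * Dbb K γ))⁻¹ * (Dbb K γ)ᵀ) *ᵥ s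

/-- The constrained PCR estimator
`α̂_R(γ, s) = α̂(γ, s) − [𝕏(γ)ᵀ𝕏(γ)]⁻¹Rᵀ{R[𝕏(γ)ᵀ𝕏(γ)]⁻¹Rᵀ}⁻¹(R α̂(γ, s) − c)`. -/
def alphaHatR {N G K T r : ℕ} (X : Fin N → Matrix (Fin T) (Fin K) ℝ)
    (γ : Fin N → Fin G) (R : Matrix (Fin r) (Fin G × Fin K) ℝ) (c : Fin r → ℝ)
    (s : Fin N × Fin K → ℝ) : Fin G × Fin K → ℝ :=
  alphaHat X γ s -
    (((bigX X * Dbb K γ)ᵀ * (bigX X * Dbb K γ))⁻¹ * Rᵀ *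
      (R * ((bigX X * Dbb K γ)ᵀ * (bigX X * Dbb K γ))⁻¹ * Rᵀ)⁻¹) *ᵥ
      (R *ᵥ alphaHat X γ s - c)


lemma myPosDef_transpose_mul_self {m n : Type*} [Fintype m] [Fintype n]
    (M : Matrix m n ℝ) (h : ∀ v : n → ℝ, M *ᵥ v = 0 → v = 0) :
    (Mᵀ * M).PosDef := by
  rw [Matrix.posDef_iff_dotProduct_mulVec]
  constructor
  · ext i j
    simp [Matrix.conjTranspose_apply, Matrix.mul_apply, mul_comm]
  · intro x hx
    have hx' : M *ᵥ x ≠ 0 := fun h0 => hx (h x h0)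
    have : star x ⬝ᵥ ((Mᵀ * M) *ᵥ x) = (M *ᵥ x) ⬝ᵥ (M *ᵥ x) := by
      rw [star_trivial, ← mulVec_mulVec, dotProduct_mulVec, vecMul_transpose]
    rw [this]
    have h1 : (0:ℝ) ≤ (M *ᵥ x) ⬝ᵥ (M *ᵥ x) :=
      Finset.sum_nonneg fun i _ => mul_self_nonneg _
    have h2 : (M *ᵥ x) ⬝ᵥ (M *ᵥ x) ≠ 0 := fun h0 => hx' (dotProduct_self_eq_zero.mp h0)
    exact lt_of_le_of_ne h1 (Ne.symm h2)

lemma myPosDef_mul_mul_transpose {m n : Type*} [Fintype m] [Fintype n]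
    {M : Matrix n n ℝ} (hM : M.PosDef) (B : Matrix m n ℝ)
    (hB : ∀ x : m → ℝ, Bᵀ *ᵥ x = 0 → x = 0) :
    (B * M * Bᵀ).PosDef := by
  rw [Matrix.posDef_iff_dotProduct_mulVec]
  constructor
  · have : (B * M * Bᵀ)ᴴ = B * Mᴴ * Bᵀ := by
      simp [conjTranspose_eq_transpose_of_trivial, Matrix.transpose_mul, Matrix.mul_assoc]
    rw [IsHermitian, this, hM.1.eq]
  · intro x hx
    have hBx : Bᵀ *ᵥ x ≠ 0 := fun h0 => hx (hB x h0)
    have : star x ⬝ᵥ ((B * M * Bᵀ) *ᵥ x) = star (Bᵀ *ᵥ x) ⬝ᵥ (M *ᵥ (Bᵀ *ᵥ x)) := by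
      rw [star_trivial, star_trivial, ← mulVec_mulVec, ← mulVec_mulVec,
        dotProduct_mulVec x B, Matrix.mulVec_transpose]
    rw [this]
    exact hM.dotProduct_mulVec_pos hBx


/-- The key matrix-orthogonality identity from the proof of Lemma C.1 of the paper. -/
theorem stmt_11 {N G K T r : ℕ}
    (hN : 0 < N) (hG : 0 < G) (hK : 0 < K) (hT : 0 < T) (hr : 0 < r)
    (γ : Fin N → Fin G) (hγ : ∀ g : Fin G, ∃ i : Fin N, γ i = g)
    (S : Matrix (Fin K) (Fin K) ℝ) (hS : S.PosDef)
    (X : Fin N → Matrix (Fin T) (Fin K) ℝ) (hX : ∀ i, (X i)ᵀ * X i = S)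
    (R : Matrix (Fin r) (Fin G × Fin K) ℝ) (hR : R.rank = r) :
    ((bigX X)ᵀ * (bigX X * Dbb K γ) *
          ((bigX X * Dbb K γ)ᵀ * (bigX X * Dbb K γ))⁻¹ * Rᵀ *
          (R * ((bigX X * Dbb K γ)ᵀ * (bigX X * Dbb K γ))⁻¹ * Rᵀ)⁻¹ * R *
          ((bigX X * Dbb K γ)ᵀ * (bigX X * Dbb K γ))⁻¹ * (Dbb K γ)ᵀ -
        (1 : Matrix (Fin N × Fin K) (Fin N × Fin K) ℝ)) *
      ((bigX X)ᵀ * bigX X) *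
      (Dbb K γ * ((bigX X * Dbb K γ)ᵀ * (bigX X * Dbb K γ))⁻¹ * Rᵀ) = 0 := by
  classical
  set Xb := bigX X with hXb
  set D := Dbb K γ with hDdef
  set A := (Xb * D)ᵀ * (Xb * D) with hAdef
  -- mulVec computations
  have hDv : ∀ (v : Fin G × Fin K → ℝ) (j : Fin N) (l : Fin K),
      (D *ᵥ v) (j, l) = v (γ j, l) := by
    intro v j l
    simp [hDdef, Dbb, Dmat, Matrix.mulVec, dotProduct, Fintype.sum_prod_type,
      Matrix.one_apply, Matrix.kroneckerMap_apply, ite_mul, one_mul, zero_mul,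
      Finset.sum_ite_eq, Finset.sum_ite_eq']
  have hXbw : ∀ (w : Fin N × Fin K → ℝ) (i : Fin N) (t : Fin T),
      (Xb *ᵥ w) (i, t) = ∑ l, X i t l * w (i, l) := by
    intro w i t
    simp [hXb, bigX, Matrix.mulVec, dotProduct, Fintype.sum_prod_type,
      ite_mul, zero_mul, Finset.sum_ite_eq, Finset.sum_ite_eq']
  have hMinj : ∀ v : Fin G × Fin K → ℝ, (Xb * D) *ᵥ v = 0 → v = 0 := by
    intro v hv
    funext p
    obtain ⟨i, hi⟩ := hγ p.1
    set w : Fin K → ℝ := fun k => v (p.1, k) with hw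
    have hXw : X i *ᵥ w = 0 := by
      funext t
      have : ((Xb * D) *ᵥ v) (i, t) = 0 := by rw [hv]; rfl
      rw [← Matrix.mulVec_mulVec] at this
      rw [hXbw] at this
      simp only [hDv, hi] at this
      simpa [Matrix.mulVec, dotProduct, hw] using this
    have hw0 : w = 0 := by
      by_contra hw0
      have hpos := hS.dotProduct_mulVec_pos hw0
      rw [← hX i] at hpos
      have : star w ⬝ᵥ (((X i)ᵀ * X i) *ᵥ w) = (X i *ᵥ w) ⬝ᵥ (X i *ᵥ w) := by
        rw [star_trivial, ← mulVec_mulVec, dotProduct_mulVec, vecMul_transpose]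
      rw [this, hXw] at hpos
      simp at hpos
    have : v p = w p.2 := by rw [hw]
    rw [this, hw0]; rfl
  have hApd : A.PosDef := myPosDef_transpose_mul_self _ hMinj
  have hAdet : IsUnit A.det := (Matrix.isUnit_iff_isUnit_det A).mp hApd.isUnit
  -- R has linearly independent rows
  have hRli : LinearIndependent ℝ (fun i => R i) := by
    apply linearIndependent_iff_card_eq_finrank_span.mpr
    rw [Set.finrank, show (fun i => R i) = R.row from rfl, ← Matrix.rank_eq_finrank_span_row, hR, Fintype.card_fin]
  have hRinj : ∀ x : Fin r → ℝ, Rᵀ *ᵥ x = 0 → x = 0 := by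
    intro x hx
    have hinj := Matrix.vecMul_injective_iff.mpr hRli
    apply hinj
    show x ᵥ* R = (0 : Fin r → ℝ) ᵥ* R
    rw [← Matrix.mulVec_transpose, hx, Matrix.zero_vecMul]
  have hBpd : (R * A⁻¹ * Rᵀ).PosDef := myPosDef_mul_mul_transpose hApd.inv R hRinj
  have hBdet : IsUnit (R * (A⁻¹ * Rᵀ)).det := by
    rw [← Matrix.mul_assoc]
    exact (Matrix.isUnit_iff_isUnit_det _).mp hBpd.isUnit
  have hAeq : Dᵀ * (Xbᵀ * (Xb * (D * (A⁻¹ * Rᵀ)))) = Rᵀ := by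
    have h1 : Dᵀ * (Xbᵀ * (Xb * (D * (A⁻¹ * Rᵀ)))) = A * (A⁻¹ * Rᵀ) := by
      rw [hAdef, Matrix.transpose_mul]
      simp only [Matrix.mul_assoc]
    rw [h1, ← Matrix.mul_assoc, Matrix.mul_nonsing_inv A hAdet, Matrix.one_mul]
  have hBeq : Rᵀ * ((R * (A⁻¹ * Rᵀ))⁻¹ * (R * (A⁻¹ * Rᵀ))) = Rᵀ := by
    rw [Matrix.nonsing_inv_mul _ hBdet, Matrix.mul_one]
  simp only [Matrix.sub_mul, Matrix.one_mul, Matrix.mul_assoc, hAeq, hBeq, sub_self]
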